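/- Let X : ℝ → ℝⁿ. If (X, x, q) solve the Zwanzig Hamiltonian system M Ẍ = −λ'(X) + ⟨mĤ(x − Ψ̂(X)), Ψ̂'(X)⟩, ẋ = m⁻¹ Ĥ q, q̇ = −mĤ(x − Ψ̂(X)), then ψ := (x − Ψ̂(X)) + i·(q/m) : ℝ → E satisfies i ψ̇ = Ĥ ψ − i Ψ̂'(X) Ẋ. -/

import Mathlib

open Matrix

/-- the Zwanzig Hamiltonian system is equivalent to a Schrödinger equation:
if `(X, x, q)` solve `M Ẍ = −λ'(X) + ⟨mĤ(x − Ψ̂(X)), Ψ̂'(X)⟩`, `ẋ = m⁻¹ Ĥ q`,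
`q̇ = −mĤ(x − Ψ̂(X))`, then `ψ := (x − Ψ̂(X)) + i q/m` satisfies
`i ψ̇ = Ĥ ψ − i Ψ̂'(X) Ẋ`, i.e. `ψ̇ = −i Ĥ ψ − d/dt Ψ̂(X(t))`. -/
theorem zwanzig_schroedinger_form
    {N J : ℕ} (Hm : Matrix (Fin J) (Fin J) ℝ) (hsymm : Hm.IsSymm) (hpos : Hm.PosDef)
    (m : ℝ) (hm : 0 < m)
    (lamgrad : (Fin N → ℝ) → Fin N → ℝ)
    (Psihat : (Fin N → ℝ) → Fin J → ℝ)
    (Jac : (Fin N → ℝ) → Fin J → Fin N → ℝ)    -- Jacobian Ψ̂'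
    (DPsi : ℝ → Fin J → ℝ)                     -- d/dt Ψ̂(X(t)) (chain rule)
    (X P x q : ℝ → _)
    (hX : ∀ t : ℝ, HasDerivAt X (P t) t)
    (hP : ∀ t : ℝ, HasDerivAt P
      (fun n => -lamgrad (X t) n
        + ∑ j, m * Hm.mulVec (x t - Psihat (X t)) j * Jac (X t) j n) t)
    (hchain : ∀ t : ℝ, HasDerivAt (fun s => Psihat (X s)) (DPsi t) t)
    (hx : ∀ t : ℝ, HasDerivAt x (m⁻¹ • Hm.mulVec (q t)) t)
    (hq : ∀ t : ℝ, HasDerivAt q (-(m • Hm.mulVec (x t - Psihat (X t)))) t) :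
    ∀ t : ℝ, HasDerivAt
      (fun s => fun j => ((x s j - Psihat (X s) j : ℝ) : ℂ) + Complex.I * ((q s j : ℝ) / m))
      (fun j => -Complex.I *
          (Hm.map (fun r => (r : ℂ))).mulVec
            (fun j' => ((x t j' - Psihat (X t) j' : ℝ) : ℂ) + Complex.I * ((q t j' : ℝ) / m)) j
        - (DPsi t j : ℂ)) t := by
  intro t
  rw [hasDerivAt_pi]
  intro j
  have hxj : HasDerivAt (fun s => x s j) ((m⁻¹ • Hm.mulVec (q t)) j) t :=
    (hasDerivAt_pi.mp (hx t)) j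
  have hpj : HasDerivAt (fun s => Psihat (X s) j) (DPsi t j) t :=
    (hasDerivAt_pi.mp (hchain t)) j
  have hqj : HasDerivAt (fun s => q s j) ((-(m • Hm.mulVec (x t - Psihat (X t)))) j) t :=
    (hasDerivAt_pi.mp (hq t)) j
  have h1 : HasDerivAt (fun s => ((x s j - Psihat (X s) j : ℝ) : ℂ))
      (((m⁻¹ • Hm.mulVec (q t)) j - DPsi t j : ℝ) : ℂ) t :=
    ((hxj.sub hpj)).ofReal_comp
  have h2 : HasDerivAt (fun s => Complex.I * ((q s j : ℝ) / m))
      (Complex.I * (((-(m • Hm.mulVec (x t - Psihat (X t)))) j : ℝ) / m)) t := by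
    have := (hqj.ofReal_comp.div_const (m : ℂ)).const_mul Complex.I
    simpa using this
  have h := h1.add h2
  convert h using 1
  · rfl
  have hm' : (m : ℂ) ≠ 0 := by exact_mod_cast hm.ne'
  simp only [Matrix.mulVec, dotProduct, Matrix.map_apply, Pi.smul_apply, Pi.neg_apply,
    Pi.sub_apply, smul_eq_mul, neg_mul]
  push_cast
  have key : (Complex.I * ∑ i, ((Hm j i : ℂ) * ((x t i : ℂ) - (Psihat (X t) i : ℂ) + Complex.I * ((q t i : ℂ) / (m : ℂ)))))
      = ∑ i, (Complex.I * ((Hm j i : ℂ) * ((x t i : ℂ) - (Psihat (X t) i : ℂ))) - ((Hm j i : ℂ) * (q t i : ℂ)) / (m : ℂ)) := by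
    rw [Finset.mul_sum]
    refine Finset.sum_congr rfl fun i _ => ?_
    field_simp
    linear_combination ((Hm j i : ℂ) * (q t i : ℂ)) * Complex.I_sq
  rw [key, Finset.sum_sub_distrib, ← Finset.sum_div, ← Finset.mul_sum]
  field_simp
  ring
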